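/- arXiv:math/0702452 — 5 statements merged into one kernel-verified Lean document; each statement's English description precedes it below -/
import Mathlib

section
/- The excedance number and the descent number are equidistributed on S_n: for every n and k, the number of permutations π ∈ S_n with exc(π) = k equals the number of permutations π ∈ S_n with des(π) = k. -/
open Finset

/-- The excedance number of a permutation of `{1,…,n}` (modeled on `Fin n`). -/
noncomputable def excPerm {n : ℕ} (π : Equiv.Perm (Fin n)) : ℕ :=
  Nat.card {i : Fin n // i < π i}

/-- The descent number `des(π) = |{i ∈ [n-1] : π(i) > π(i+1)}|`. -/
noncomputable def desPerm {n : ℕ} (π : Equiv.Perm (Fin n)) : ℕ :=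
  Nat.card {i : Fin n // ∃ h : i.val + 1 < n, π ⟨i.val + 1, h⟩ < π i}

/-!
Both statistics obey the Eulerian recurrence. Lift `π : Perm (Fin n)` to `Fin (n + 1)` by shifting
its values up by one and fixing `0`, then for a position `j` either insert the new value `0` at
position `j` (precompose with `cycleRange j`) or put it at position `j` and move the entry found
there to the front (precompose with `swap 0 j`). Each gives a bijection
`Perm (Fin n) × Fin (n + 1) ≃ Perm (Fin (n + 1))`. For the first, des is unchanged when `j = 0` or
`j - 1` is a descent of `π` and grows by one otherwise; for the second, the same holds for exc with
excedances in place of descents. So for both statistics `s` and every `f : ℕ → ℕ`,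
`∑ τ, f (s τ) = ∑ π, ((s π + 1) * f (s π) + (n - s π) * f (s π + 1))`, and induction on `n`,
changing `f` at each step, gives `∑ π, f (exc π) = ∑ π, f (des π)`.
-/

open Equiv

namespace Equiv.Perm

variable {n : ℕ}

def succLift (π : Perm (Fin n)) : Perm (Fin (n + 1)) :=
  decomposeFin.symm (0, π)

@[simp]
lemma succLift_zero (π : Perm (Fin n)) : succLift π 0 = 0 :=
  decomposeFin_symm_apply_zero _ _

@[simp]
lemma succLift_succ (π : Perm (Fin n)) (i : Fin n) : succLift π i.succ = (π i).succ := by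
  simp [succLift, decomposeFin_symm_apply_succ]

lemma succLift_injective : Function.Injective (succLift (n := n)) :=
  fun _ _ h => congrArg Prod.snd (decomposeFin.symm.injective h)

@[simp]
lemma succLift_eq_zero_iff {π : Perm (Fin n)} {x : Fin (n + 1)} : succLift π x = 0 ↔ x = 0 := by
  conv_lhs => rw [← succLift_zero π]
  exact (succLift π).apply_eq_iff_eq

lemma bijective_succLift_mul {c : Fin (n + 1) → Perm (Fin (n + 1))} (hc : ∀ j, c j j = 0) :
    Function.Bijective fun p : Perm (Fin n) × Fin (n + 1) => succLift p.1 * c p.2 := by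
  refine (Fintype.bijective_iff_injective_and_card _).2 ⟨?_, ?_⟩
  · rintro ⟨π, i⟩ ⟨σ, j⟩ h
    simp only at h
    have hij : i = j := by
      have hi := congrArg (· i) h
      simp only [coe_mul, Function.comp_apply, hc, succLift_zero] at hi
      exact (c j).injective ((succLift_eq_zero_iff.1 hi.symm).trans (hc j).symm)
    subst hij
    rw [succLift_injective (mul_right_cancel h)]
  · simp [Fintype.card_perm, Nat.factorial_succ, mul_comm]

end Equiv.Perm

open Equiv.Perm

section Excedances

variable {n : ℕ}

lemma excPerm_eq_card (π : Perm (Fin n)) : excPerm π = #{i | i < π i} := by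
  rw [excPerm, Nat.card_eq_fintype_card, Fintype.card_subtype]

lemma excPerm_succLift_mul_swap (π : Perm (Fin n)) (p : Fin (n + 1)) :
    excPerm (succLift π * swap 0 p) = (if p = 0 then 0 else 1) + #{i | i < π i ∧ i.succ ≠ p} := by
  rw [excPerm_eq_card, Fin.card_filter_univ_succ']
  congr 1
  · simp [Fin.pos_iff_ne_zero]
  · refine congrArg card (filter_congr fun i _ => ?_)
    by_cases hi : i.succ = p
    · simp [hi]
    · rw [Perm.coe_mul, Function.comp_apply, swap_apply_of_ne_of_ne (Fin.succ_ne_zero i) hi]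
      simp [hi]

lemma excPerm_succLift_mul_swap_zero (π : Perm (Fin n)) :
    excPerm (succLift π * swap 0 0) = excPerm π := by
  simpa [excPerm_eq_card π, ← Perm.one_def] using excPerm_succLift_mul_swap π 0

lemma excPerm_succLift_mul_swap_succ (π : Perm (Fin n)) (a : Fin n) :
    excPerm (succLift π * swap 0 a.succ) = excPerm π + if a < π a then 0 else 1 := by
  rw [excPerm_succLift_mul_swap, if_neg (Fin.succ_ne_zero a), excPerm_eq_card]
  simp only [ne_eq, Fin.succ_inj]
  rw [← filter_filter, filter_ne', card_erase_eq_ite]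
  split_ifs with hmem ha ha
  · have := card_pos.2 ⟨a, hmem⟩
    omega
  all_goals simp_all [add_comm]

end Excedances

section Descents

variable {n : ℕ}

def IsDescent (π : Perm (Fin n)) (i : Fin n) : Prop :=
  ∃ h : i.val + 1 < n, π ⟨i.val + 1, h⟩ < π i

instance (π : Perm (Fin n)) : DecidablePred (IsDescent π) :=
  fun _ => inferInstanceAs (Decidable (∃ _ : _, _))

lemma desPerm_eq_card (π : Perm (Fin n)) : desPerm π = #{i | IsDescent π i} := by
  change Nat.card {i // IsDescent π i} = _
  rw [Nat.card_eq_fintype_card, Fintype.card_subtype]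

lemma isDescent_iff {π : Perm (Fin n)} {i i' : Fin n} (h : i.val + 1 = i'.val) :
    IsDescent π i ↔ π i' < π i := by
  obtain ⟨i', hi'⟩ := i'
  subst h
  exact ⟨fun ⟨_, hlt⟩ => hlt, fun hlt => ⟨hi', hlt⟩⟩

lemma not_isDescent_of_val_add_one_eq {π : Perm (Fin n)} {i : Fin n} (h : i.val + 1 = n) :
    ¬ IsDescent π i :=
  fun ⟨hlt, _⟩ => hlt.ne h

lemma not_isDescent_of_apply_eq_zero {π : Perm (Fin (n + 1))} {i : Fin (n + 1)} (h : π i = 0) :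
    ¬ IsDescent π i :=
  fun ⟨_, hlt⟩ => Fin.not_lt_zero _ (h ▸ hlt)

lemma isDescent_succLift_mul_cycleRange_succAbove (π : Perm (Fin n)) (j : Fin (n + 1))
    (i : Fin n) :
    IsDescent (succLift π * j.cycleRange) (j.succAbove i) ↔ i.succ = j ∨ IsDescent π i := by
  have hτ (a : Fin n) : (succLift π * j.cycleRange) (j.succAbove a) = (π a).succ := by simp
  have hval (a : Fin n) : (j.succAbove a).val = if a.val < j.val then a.val else a.val + 1 := by
    simp only [Fin.succAbove, Fin.lt_def, Fin.val_castSucc]; split_ifs <;> rfl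
  by_cases hij : i.succ = j
  · refine iff_of_true ((isDescent_iff (i' := j) ?_).2 ?_) (Or.inl hij)
    · simp [← hij]
    · rw [hτ, Perm.coe_mul, Function.comp_apply, Fin.cycleRange_self, succLift_zero]
      exact Fin.succ_pos _
  rw [or_iff_right hij]
  have hj : j.val ≠ i.val + 1 := fun h => hij (Fin.ext (by simp [h]))
  rcases Nat.lt_or_ge (i.val + 1) n with hi | hi
  · set i' : Fin n := ⟨i.val + 1, hi⟩
    rw [isDescent_iff (i' := j.succAbove i'), hτ, hτ, Fin.succ_lt_succ_iff,
      isDescent_iff (i' := i') rfl]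
    simp only [hval, i']
    split_ifs <;> omega
  · rw [iff_false_intro (not_isDescent_of_val_add_one_eq (by rw [hval]; split_ifs <;> omega)),
      iff_false_intro (not_isDescent_of_val_add_one_eq (by omega))]

lemma desPerm_succLift_mul_cycleRange (π : Perm (Fin n)) (j : Fin (n + 1)) :
    desPerm (succLift π * j.cycleRange) = #{i | i.succ = j ∨ IsDescent π i} := by
  rw [desPerm_eq_card, card_filter, Fin.sum_univ_succAbove _ j,
    if_neg (not_isDescent_of_apply_eq_zero (by simp)), zero_add, card_filter]
  simp only [isDescent_succLift_mul_cycleRange_succAbove]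

lemma desPerm_succLift_mul_cycleRange_zero (π : Perm (Fin n)) :
    desPerm (succLift π * Fin.cycleRange 0) = desPerm π := by
  simpa [desPerm_eq_card π] using desPerm_succLift_mul_cycleRange π 0

lemma desPerm_succLift_mul_cycleRange_succ (π : Perm (Fin n)) (a : Fin n) :
    desPerm (succLift π * a.succ.cycleRange) = desPerm π + if IsDescent π a then 0 else 1 := by
  rw [desPerm_succLift_mul_cycleRange, desPerm_eq_card]
  simp only [Fin.succ_inj]
  rw [filter_or, filter_eq', if_pos (mem_univ a), ← insert_eq, card_insert_eq_ite]
  split_ifs <;> simp_all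

end Descents

theorem sum_comp_eq_of_insertion {n : ℕ} {ins : Perm (Fin n) × Fin (n + 1) → Perm (Fin (n + 1))}
    (hins : Function.Bijective ins) {S : Perm (Fin (n + 1)) → ℕ} {s : Perm (Fin n) → ℕ}
    (P : Perm (Fin n) → Fin n → Prop) [∀ π, DecidablePred (P π)] (hs : ∀ π, s π = #{i | P π i})
    (h_zero : ∀ π, S (ins (π, 0)) = s π)
    (h_succ : ∀ π i, S (ins (π, i.succ)) = s π + if P π i then 0 else 1) (f : ℕ → ℕ) :
    ∑ τ, f (S τ) = ∑ π, ((s π + 1) * f (s π) + (n - s π) * f (s π + 1)) := by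
  rw [← hins.sum_comp, Fintype.sum_prod_type]
  refine sum_congr rfl fun π _ => ?_
  have hcompl : #{i | ¬ P π i} = n - s π := by
    have h := card_filter_add_card_filter_not (s := (univ : Finset (Fin n))) (fun i => P π i)
    rw [card_univ, Fintype.card_fin] at h
    rw [hs]
    omega
  have hsplit : ∑ i, f (s π + if P π i then 0 else 1) =
      ∑ i, if P π i then f (s π) else f (s π + 1) :=
    sum_congr rfl fun i _ => by split_ifs <;> rfl
  rw [Fin.sum_univ_succ, h_zero]
  simp only [h_succ]
  rw [hsplit, sum_ite, sum_const, sum_const, smul_eq_mul, smul_eq_mul, ← hs, hcompl]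
  ring

theorem sum_comp_excPerm_eq_sum_comp_desPerm (n : ℕ) (f : ℕ → ℕ) :
    ∑ π : Perm (Fin n), f (excPerm π) = ∑ π : Perm (Fin n), f (desPerm π) := by
  induction n generalizing f with
  | zero => simp [excPerm_eq_card, desPerm_eq_card]
  | succ n ih =>
    rw [sum_comp_eq_of_insertion (bijective_succLift_mul (swap_apply_right 0)) (fun π i => i < π i)
        excPerm_eq_card excPerm_succLift_mul_swap_zero excPerm_succLift_mul_swap_succ,
      sum_comp_eq_of_insertion (bijective_succLift_mul Fin.cycleRange_self) IsDescent
        desPerm_eq_card desPerm_succLift_mul_cycleRange_zero desPerm_succLift_mul_cycleRange_succ]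
    exact ih fun d => (d + 1) * f d + (n - d) * f (d + 1)

/-- The excedance number and the descent number are equidistributed on `S_n`. -/
theorem exc_des_equidistributed (n k : ℕ) :
    Nat.card {π : Equiv.Perm (Fin n) // excPerm π = k} =
      Nat.card {π : Equiv.Perm (Fin n) // desPerm π = k} := by
  simp only [Nat.card_eq_fintype_card, Fintype.card_subtype, card_filter]
  exact sum_comp_excPerm_eq_sum_comp_desPerm n fun d => if d = k then 1 else 0
end

section
/- For a signed permutation π ∈ B_n, one has exc(π) = 2·exc_A(π) + neg(π), where exc is computed with respect to the color order −1 < −2 < ⋯ < −n < 1 < 2 < ⋯ < n on the alphabet {±1,...,±n} viewed via the extension of π to a bijection on this alphabet, exc_A(π) = |{i ∈ [n-1] : π(i) > i in the color order}|, and neg(π) = |{i ∈ [n] : π(i) < 0}|. -/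
open Finset Polynomial

/-- The group of colored permutations `G_{r,n} = Z_r ≀ S_n`, realized as bijections of the
colored alphabet `Σ = [n] × {0,…,r-1}` commuting with the color shift. -/
def ColoredPerm (r n : ℕ) [NeZero r] : Type :=
  {π : Equiv.Perm (Fin n × Fin r) //
    ∀ x : Fin n × Fin r, π (x.1, x.2 + 1) = ((π x).1, (π x).2 + 1)}

/-- The color order on the colored alphabet:
`1^[r-1] < ⋯ < n^[r-1] < ⋯ < 1^[0] < ⋯ < n^[0]` (higher color is smaller). -/
def colorLt {r n : ℕ} (x y : Fin n × Fin r) : Prop :=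
  y.2 < x.2 ∨ (x.2 = y.2 ∧ x.1 < y.1)

/-- The excedance number `exc` of a colored permutation. -/
noncomputable def cExc {r n : ℕ} [NeZero r] (π : ColoredPerm r n) : ℕ :=
  Nat.card {x : Fin n × Fin r // colorLt x (π.1 x)}

/-- `exc_A(π) = |{i ∈ [n-1] : π(i) > i}|` (positions are the color-0 letters,
and `i ∈ [n-1]` corresponds to `i.val + 1 < n`). -/
noncomputable def cExcA {r n : ℕ} [NeZero r] (π : ColoredPerm r n) : ℕ :=
  Nat.card {i : Fin n // i.val + 1 < n ∧ colorLt (i, 0) (π.1 (i, 0))}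

/-- `csum(π)`: the sum of the colors appearing in the window notation of `π`. -/
def csum {r n : ℕ} [NeZero r] (π : ColoredPerm r n) : ℕ :=
  ∑ i : Fin n, (π.1 (i, 0)).2.val

/-- `neg(π)`: the number of `i ∈ [n]` with `π(i) < 0`, i.e. whose image carries color `1`
(in `B_n = G_{2,n}`, the letter `i^[1]` is identified with `-i`). -/
noncomputable def negB {n : ℕ} (π : ColoredPerm 2 n) : ℕ :=
  Nat.card {i : Fin n // (π.1 (i, 0)).2 = 1}

open Classical in
lemma exc_key (n : ℕ) (π : ColoredPerm 2 n) (i : Fin n) :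
    (if colorLt (i, (0 : Fin 2)) (π.1 (i, 0)) then 1 else 0) +
      (if colorLt (i, (1 : Fin 2)) (π.1 (i, 1)) then 1 else 0) =
    2 * (if i.val + 1 < n ∧ colorLt (i, (0 : Fin 2)) (π.1 (i, 0)) then 1 else 0) +
      (if (π.1 (i, 0)).2 = 1 then 1 else 0) := by
  have h := π.2 (i, 0)
  simp only at h
  have h01 : (0 : Fin 2) + 1 = 1 := rfl
  rw [h01] at h
  obtain ⟨j, c, hp⟩ : ∃ j c, π.1 (i, 0) = (j, c) := ⟨_, _, rfl⟩
  rw [hp] at h ⊢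
  rw [h]
  have hj := j.isLt
  fin_cases c
  · by_cases hij : (i : ℕ) < (j : ℕ)
    · have hn : i.val + 1 < n := by omega
      simp [colorLt, Fin.lt_def, hij, hn]
    · simp [colorLt, Fin.lt_def, hij]
  · by_cases hij : (i : ℕ) < (j : ℕ) <;>
      simp [colorLt, Fin.lt_def, hij]

/-- For a signed permutation `π ∈ B_n`, `exc(π) = 2·exc_A(π) + neg(π)`. -/
theorem exc_eq_two_excA_add_neg (n : ℕ) (π : ColoredPerm 2 n) :
    cExc π = 2 * cExcA π + negB π := by
  classical
  rw [cExc, cExcA, negB, Nat.card_eq_fintype_card, Nat.card_eq_fintype_card,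
    Nat.card_eq_fintype_card, Fintype.card_subtype, Fintype.card_subtype,
    Fintype.card_subtype, Finset.card_filter, Finset.card_filter, Finset.card_filter,
    Fintype.sum_prod_type, Finset.mul_sum, ← Finset.sum_add_distrib]
  refine Finset.sum_congr rfl fun i _ => ?_
  rw [Fin.sum_univ_two]
  exact exc_key n π i
end

section
/- For a colored permutation σ ∈ G_{r,n} = Z_r ≀ S_n, the excedance number with respect to the color order satisfies exc(σ) = r·exc_A(σ) + csum(σ), where exc_A(σ) = |{i ∈ [n-1] : σ(i) > i in the color order}| and csum(σ) = Σ_{i=1}^n c_i(σ) with c_i(σ) = z_i(σ^{-1}) the color assigned by σ to i (taken in {0,...,r-1}). -/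
open Finset Polynomial

/-!
Fix a letter `i` and write `π(i^[0]) = j^[β]`; commuting with the color shift gives
`π(i^[α]) = j^[β+α]`. If `β = 0`, either all `r` letters `i^[α]` are excedances or none is,
according to whether `i < j`. If `β ≠ 0`, the letter `i^[α]` is an excedance exactly when
`β + α` wraps around modulo `r`, which happens for `β` values of `α`. Summing over `i` gives
`exc = r · exc_A + csum`.
-/

lemma Fin.card_filter_add_lt_self {r : ℕ} (β : Fin r) :
    #{α : Fin r | β + α < α} = β := by
  have hmap :
      (univ.filter fun α : Fin r => β + α < α).map Fin.valEmbedding = Ico (r - β) r := by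
    ext k
    simp only [mem_map, mem_filter, mem_univ, true_and, Fin.valEmbedding_apply, mem_Ico]
    constructor
    · rintro ⟨α, hα, rfl⟩
      fin_omega
    · rintro ⟨hk, hkr⟩
      exact ⟨⟨k, hkr⟩, by fin_omega, rfl⟩
  rw [← card_map, hmap, Nat.card_Ico]
  omega

instance {r n : ℕ} (x y : Fin n × Fin r) : Decidable (colorLt x y) :=
  inferInstanceAs (Decidable (_ ∨ _))

lemma colorLt_add_iff {r n : ℕ} [NeZero r] (i j : Fin n) (α β : Fin r) :
    colorLt (i, α) (j, β + α) ↔ β + α < α ∨ colorLt (i, 0) (j, β) := by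
  simp [colorLt, eq_comm (a := β)]

lemma colorLt_zero_iff {r n : ℕ} [NeZero r] {i j : Fin n} {β : Fin r} :
    colorLt (i, 0) (j, β) ↔ β = 0 ∧ i < j := by
  simp [colorLt, eq_comm]

lemma val_add_one_lt_of_colorLt_zero {r n : ℕ} [NeZero r] {i j : Fin n} {β : Fin r}
    (h : colorLt (i, 0) (j, β)) : i.val + 1 < n := by
  obtain ⟨-, hij⟩ := colorLt_zero_iff.mp h
  omega

lemma card_filter_colorLt_add {r n : ℕ} [NeZero r] (i j : Fin n) (β : Fin r) :
    #{α : Fin r | colorLt (i, α) (j, β + α)} =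
      r * (if colorLt (i, 0) (j, β) then 1 else 0) + β := by
  simp_rw [colorLt_add_iff]
  by_cases h : colorLt (i, 0) (j, β)
  · obtain ⟨rfl, -⟩ := colorLt_zero_iff.mp h
    simp [h]
  · simp [h, Fin.card_filter_add_lt_self]

namespace ColoredPerm

variable {r n : ℕ} [NeZero r]

open Fin.NatCast in
lemma apply_add (π : ColoredPerm r n) (x : Fin n × Fin r) (α : Fin r) :
    π.1 (x.1, x.2 + α) = ((π.1 x).1, (π.1 x).2 + α) := by
  have key : ∀ k : ℕ, π.1 (x.1, x.2 + k) = ((π.1 x).1, (π.1 x).2 + k) := by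
    intro k
    induction k with
    | zero => simp
    | succ k ih => push_cast; rw [← add_assoc, π.2 (x.1, x.2 + k), ih, add_assoc]
  simpa using key α

lemma apply_eq (π : ColoredPerm r n) (i : Fin n) (α : Fin r) :
    π.1 (i, α) = ((π.1 (i, 0)).1, (π.1 (i, 0)).2 + α) := by
  simpa using apply_add π (i, 0) α

lemma cExc_eq_sum (π : ColoredPerm r n) :
    cExc π = ∑ i, #{α : Fin r | colorLt (i, α) (π.1 (i, α))} := by
  simp only [cExc, Nat.card_eq_fintype_card, Fintype.card_subtype, card_filter,
    Fintype.sum_prod_type]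

lemma cExcA_eq_card (π : ColoredPerm r n) :
    cExcA π = #{i : Fin n | colorLt (i, 0) (π.1 (i, 0))} := by
  rw [cExcA, Nat.card_eq_fintype_card, Fintype.card_subtype]
  simp_rw [and_iff_right_of_imp val_add_one_lt_of_colorLt_zero]

end ColoredPerm

/-- For a colored permutation `σ ∈ G_{r,n}`, `exc(σ) = r·exc_A(σ) + csum(σ)`. -/
theorem exc_eq_r_excA_add_csum (r n : ℕ) [NeZero r] (π : ColoredPerm r n) :
    cExc π = r * cExcA π + csum π := by
  have row (i : Fin n) := card_filter_colorLt_add i (π.1 (i, 0)).1 (π.1 (i, 0)).2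
  simp_rw [← ColoredPerm.apply_eq] at row
  rw [ColoredPerm.cExc_eq_sum, ColoredPerm.cExcA_eq_card, csum, card_filter, mul_sum,
    ← sum_add_distrib]
  exact sum_congr rfl fun i _ => row i
end

section
/- Let d(r,n,k) be the number of colored permutations π ∈ G_{r,n} with exc_A(π) = k. Then d(r,n,k) = (n−k)·d(r,n−1,k−1) + (k+1+(r−1)(n−k))·d(r,n−1,k) + (k+1)(r−1)·d(r,n−1,k+1). -/
open Finset Polynomial

/-- `d(r,n,k)`: the number of colored permutations `π ∈ G_{r,n}` with `exc_A(π) = k`.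
The index `k` ranges over `ℤ`, so counts vanish for negative `k`. -/
noncomputable def dG (r n : ℕ) [NeZero r] (k : ℤ) : ℕ :=
  Nat.card {π : ColoredPerm r n // (cExcA π : ℤ) = k}

/-!
In window notation a colored permutation of `G_{r,n}` is a pair `(σ, c)` of a permutation of
`[n]` and a coloring, and `exc_A` counts the positions `i` with `c i = 0` and `i < σ i`.
Every window of size `m + 1` arises exactly once by prepending a letter `0 ↦ p` of color `d` to a
window `(τ, c')` of size `m`; the position that `τ` sent to `p` is redirected to `0`. This creates
an excedance at `0` iff `p ≠ 0` and `d = 0`, and destroys one iff `p` is the image of an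
excedance of `(τ, c')`. So if `(τ, c')` has `J` excedances, of the `(m + 1) r` choices of
`(p, d)` exactly `m - J` raise the count by one and `J (r - 1)` lower it by one, which gives the
three coefficients of the recursion.
-/

open Equiv

theorem Finset.card_filter_apply_eq {α β : Type*} [DecidableEq β] {f : α → β}
    (hf : Function.Injective f) (s : Finset α) (b : β) :
    #{a ∈ s | f a = b} = if b ∈ s.image f then 1 else 0 := by
  rw [card_filter, ← sum_image (f := fun y => if y = b then 1 else 0) fun _ _ _ _ h => hf h,
    sum_ite_eq']

theorem Finset.card_filter_add_ite_eq_add_ite {α : Type*} [Fintype α] (A B : α → Prop)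
    [DecidablePred A] [DecidablePred B] (J k : ℤ) :
    (#{x | J + (if A x then 1 else 0) = k + (if B x then 1 else 0)} : ℤ) =
      (if J = k - 1 then (#{x | A x ∧ ¬B x} : ℤ) else 0) +
        (if J = k then (Fintype.card α : ℤ) - #{x | A x ∧ ¬B x} - #{x | ¬A x ∧ B x} else 0) +
        (if J = k + 1 then (#{x | ¬A x ∧ B x} : ℤ) else 0) := by
  simp only [Fintype.card_eq_sum_ones, card_filter, Nat.cast_sum, Nat.cast_ite, Nat.cast_one,
    Nat.cast_zero, ← sum_sub_distrib, ite_sum_zero, ← sum_add_distrib]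
  refine sum_congr rfl fun x _ => ?_
  by_cases hA : A x <;> by_cases hB : B x <;>
    simp only [hA, hB, not_true_eq_false, not_false_eq_true, and_true, and_false, if_true,
      if_false] <;>
    split_ifs <;> omega

namespace ColoredPerm

variable {r n : ℕ} [NeZero r]

open Fin.NatCast in
theorem apply_eq_apply_zero_add (π : ColoredPerm r n) (i : Fin n) (t : Fin r) :
    π.1 (i, t) = ((π.1 (i, 0)).1, (π.1 (i, 0)).2 + t) := by
  suffices h : ∀ m : ℕ, π.1 (i, (m : Fin r)) = ((π.1 (i, 0)).1, (π.1 (i, 0)).2 + m) by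
    simpa using h t
  intro m
  induction m with
  | zero => simp
  | succ m ih => simpa [ih, add_assoc] using π.2 (i, (m : Fin r))

theorem window_injective (π : ColoredPerm r n) : Function.Injective fun i => (π.1 (i, 0)).1 := by
  intro i j h
  have : π.1 (j, (π.1 (i, 0)).2 - (π.1 (j, 0)).2) = π.1 (i, 0) := by
    rw [apply_eq_apply_zero_add]
    exact Prod.ext h.symm (add_sub_cancel _ _)
  exact (Prod.ext_iff.mp (π.1.injective this)).1.symm

def ofWindow (σ : Perm (Fin n)) (c : Fin n → Fin r) : ColoredPerm r n :=
  ⟨{ toFun := fun x => (σ x.1, c x.1 + x.2)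
     invFun := fun y => (σ.symm y.1, y.2 - c (σ.symm y.1))
     left_inv := fun x => by simp
     right_inv := fun y => by simp },
   fun x => by simp [add_assoc]⟩

@[simp]
theorem ofWindow_apply (σ : Perm (Fin n)) (c : Fin n → Fin r) (x : Fin n × Fin r) :
    (ofWindow σ c).1 x = (σ x.1, c x.1 + x.2) :=
  rfl

noncomputable def windowEquiv : ColoredPerm r n ≃ Perm (Fin n) × (Fin n → Fin r) where
  toFun π := (.ofBijective _ (Finite.injective_iff_bijective.mp π.window_injective),
    fun i => (π.1 (i, 0)).2)
  invFun w := ofWindow w.1 w.2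
  left_inv π := Subtype.ext <| Equiv.ext fun ⟨i, t⟩ => by simp [π.apply_eq_apply_zero_add i t]
  right_inv w := Prod.ext (Equiv.ext fun i => by simp) (funext fun i => by simp)

end ColoredPerm

open ColoredPerm

section Window

variable {r n : ℕ} [NeZero r]

def excASet (w : Perm (Fin n) × (Fin n → Fin r)) : Finset (Fin n) :=
  {i | w.2 i = 0 ∧ i < w.1 i}

theorem mem_excASet {w : Perm (Fin n) × (Fin n → Fin r)} {i : Fin n} :
    i ∈ excASet w ↔ w.2 i = 0 ∧ i < w.1 i := by
  simp [excASet]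

theorem cExcA_ofWindow (σ : Perm (Fin n)) (c : Fin n → Fin r) :
    cExcA (ofWindow σ c) = #(excASet (σ, c)) := by
  rw [cExcA, ← Nat.card_eq_finsetCard]
  refine Nat.card_congr (Equiv.subtypeEquivRight fun i => ?_)
  simp only [mem_excASet, ofWindow_apply, add_zero, colorLt, Fin.not_lt_zero, false_or,
    eq_comm (a := (0 : Fin r))]
  exact ⟨fun h => h.2, fun h => ⟨(Nat.succ_le_of_lt h.2).trans_lt (σ i).isLt, h⟩⟩

theorem cExcA_eq_card_excASet (π : ColoredPerm r n) : cExcA π = #(excASet (windowEquiv π)) := by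
  conv_lhs => rw [← windowEquiv.symm_apply_apply π]
  exact cExcA_ofWindow _ _

theorem dG_eq_card_excASet (k : ℤ) :
    dG r n k = #{w : Perm (Fin n) × (Fin n → Fin r) | (#(excASet w) : ℤ) = k} := by
  rw [dG, ← Fintype.card_subtype, ← Nat.card_eq_fintype_card]
  exact Nat.card_congr (windowEquiv.subtypeEquiv fun π => by rw [cExcA_eq_card_excASet])

theorem sum_ite_card_excASet_eq (K C : ℤ) :
    ∑ w : Perm (Fin n) × (Fin n → Fin r), (if (#(excASet w) : ℤ) = K then C else 0) =
      C * dG r n K := by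
  rw [← sum_filter, sum_const, dG_eq_card_excASet, nsmul_eq_mul, mul_comm]

end Window

section Insert

variable {r m : ℕ}

/-- Prepends the letter `0 ↦ p` of color `d`: the new permutation `decomposeFin.symm (p, τ)`
sends `0 ↦ p` and `i + 1 ↦ swap 0 p (τ i + 1)`. -/
def insertWindow :
    (Perm (Fin m) × (Fin m → Fin r)) × (Fin (m + 1) × Fin r) ≃
      Perm (Fin (m + 1)) × (Fin (m + 1) → Fin r) where
  toFun x := (Perm.decomposeFin.symm (x.2.1, x.1.1), Fin.cons x.2.2 x.1.2)
  invFun y := (((Perm.decomposeFin y.1).2, Fin.tail y.2), ((Perm.decomposeFin y.1).1, y.2 0))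
  left_inv _ := by simp
  right_inv y := Prod.ext (by simp) (Fin.cons_self_tail y.2)

theorem insertWindow_apply (w : Perm (Fin m) × (Fin m → Fin r)) (p : Fin (m + 1)) (d : Fin r) :
    insertWindow (w, (p, d)) = (Perm.decomposeFin.symm (p, w.1), Fin.cons d w.2) :=
  rfl

variable [NeZero r]

theorem zero_mem_excASet_insertWindow (w : Perm (Fin m) × (Fin m → Fin r)) (p : Fin (m + 1))
    (d : Fin r) : 0 ∈ excASet (insertWindow (w, (p, d))) ↔ p ≠ 0 ∧ d = 0 := by
  simp [mem_excASet, insertWindow_apply, Fin.pos_iff_ne_zero, and_comm]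

theorem succ_mem_excASet_insertWindow (w : Perm (Fin m) × (Fin m → Fin r)) (p : Fin (m + 1))
    (d : Fin r) (i : Fin m) :
    i.succ ∈ excASet (insertWindow (w, (p, d))) ↔ i ∈ excASet w ∧ (w.1 i).succ ≠ p := by
  simp only [mem_excASet, insertWindow_apply, Fin.cons_succ, Perm.decomposeFin_symm_apply_succ]
  by_cases hp : (w.1 i).succ = p
  · simp [hp]
  · rw [swap_apply_of_ne_of_ne (Fin.succ_ne_zero _) hp, Fin.succ_lt_succ_iff]
    tauto

theorem card_excASet_insertWindow (w : Perm (Fin m) × (Fin m → Fin r)) (p : Fin (m + 1))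
    (d : Fin r) :
    #(excASet (insertWindow (w, (p, d)))) +
        (if p ∈ (excASet w).image (Fin.succ ∘ w.1) then 1 else 0) =
      #(excASet w) + if p ≠ 0 ∧ d = 0 then 1 else 0 := by
  have h_split : #(excASet (insertWindow (w, (p, d)))) =
      (if p ≠ 0 ∧ d = 0 then 1 else 0) + #{i ∈ excASet w | (w.1 i).succ ≠ p} := by
    have := Fin.card_filter_univ_succ' (· ∈ excASet (insertWindow (w, (p, d))))
    simp only [filter_mem_eq_inter, univ_inter, zero_mem_excASet_insertWindow,
      succ_mem_excASet_insertWindow] at this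
    rw [this, ← filter_filter, filter_mem_eq_inter, univ_inter]
  rw [h_split, ← card_filter_apply_eq ((Fin.succ_injective _).comp w.1.injective),
    ← card_filter_add_card_filter_not (s := excASet w) (fun i => (w.1 i).succ = p)]
  simp only [Function.comp_apply]
  ring

theorem card_filter_shift_eq {H : Finset (Fin (m + 1))} (h0H : 0 ∉ H) (k : ℤ) :
    (#{x : Fin (m + 1) × Fin r |
        (#H : ℤ) + (if x.1 ≠ 0 ∧ x.2 = 0 then 1 else 0) = k + (if x.1 ∈ H then 1 else 0)} : ℤ) =
      (if (#H : ℤ) = k - 1 then (m + 1 - k : ℤ) else 0) +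
        (if (#H : ℤ) = k then k + 1 + (r - 1) * (m + 1 - k) else 0) +
        (if (#H : ℤ) = k + 1 then (k + 1) * (r - 1) else 0) := by
  have h_up : (#{x : Fin (m + 1) × Fin r | (x.1 ≠ 0 ∧ x.2 = 0) ∧ x.1 ∉ H} : ℤ) = m - #H := by
    have h_prod : ({x | (x.1 ≠ 0 ∧ x.2 = 0) ∧ x.1 ∉ H} : Finset (Fin (m + 1) × Fin r)) =
        (insert 0 H)ᶜ ×ˢ {0} := by
      ext ⟨p, d⟩
      simp only [mem_filter, mem_univ, true_and, mem_product, mem_compl, mem_insert,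
        mem_singleton, not_or]
      tauto
    have h_le : #H + 1 ≤ m + 1 := by
      simpa [card_insert_of_notMem h0H] using card_le_univ (insert 0 H)
    rw [h_prod, card_product, card_compl, card_insert_of_notMem h0H, card_singleton,
      Fintype.card_fin, mul_one]
    omega
  have h_down : (#{x : Fin (m + 1) × Fin r | ¬(x.1 ≠ 0 ∧ x.2 = 0) ∧ x.1 ∈ H} : ℤ) =
      #H * (r - 1) := by
    have h_prod : ({x | ¬(x.1 ≠ 0 ∧ x.2 = 0) ∧ x.1 ∈ H} : Finset (Fin (m + 1) × Fin r)) =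
        H ×ˢ {0}ᶜ := by
      ext ⟨p, d⟩
      have hp : p ∈ H → p ≠ 0 := fun h => ne_of_mem_of_not_mem h h0H
      simp only [mem_filter, mem_univ, true_and, mem_product, mem_compl, mem_singleton]
      tauto
    rw [h_prod, card_product, card_compl, card_singleton, Fintype.card_fin, Nat.cast_mul,
      Nat.cast_sub NeZero.one_le, Nat.cast_one]
  rw [card_filter_add_ite_eq_add_ite, h_up, h_down]
  generalize (#H : ℤ) = J
  simp only [Fintype.card_prod, Fintype.card_fin, Nat.cast_mul]
  split_ifs <;> first | omega | (subst_vars; push_cast; ring)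

theorem card_insertWindow_fiber (w : Perm (Fin m) × (Fin m → Fin r)) (k : ℤ) :
    (#{x : Fin (m + 1) × Fin r | (#(excASet (insertWindow (w, x))) : ℤ) = k} : ℤ) =
      (if (#(excASet w) : ℤ) = k - 1 then (m + 1 - k : ℤ) else 0) +
        (if (#(excASet w) : ℤ) = k then k + 1 + (r - 1) * (m + 1 - k) else 0) +
        (if (#(excASet w) : ℤ) = k + 1 then (k + 1) * (r - 1) else 0) := by
  set H := (excASet w).image (Fin.succ ∘ w.1)
  have hH : #H = #(excASet w) :=
    card_image_of_injective _ ((Fin.succ_injective _).comp w.1.injective)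
  have h0H : (0 : Fin (m + 1)) ∉ H := by simp [H, Fin.succ_ne_zero]
  have h_fiber : ∀ x : Fin (m + 1) × Fin r, (#(excASet (insertWindow (w, x))) : ℤ) = k ↔
      (#H : ℤ) + (if x.1 ≠ 0 ∧ x.2 = 0 then 1 else 0) = k + (if x.1 ∈ H then 1 else 0) := by
    rintro ⟨p, d⟩
    have := card_excASet_insertWindow w p d
    split_ifs at this ⊢ <;> omega
  rw [filter_congr fun x _ => h_fiber x, card_filter_shift_eq h0H, hH]

theorem dG_succ_eq_sum (k : ℤ) :
    (dG r (m + 1) k : ℤ) = ∑ w : Perm (Fin m) × (Fin m → Fin r),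
      (#{x : Fin (m + 1) × Fin r | (#(excASet (insertWindow (w, x))) : ℤ) = k} : ℤ) := by
  rw [dG_eq_card_excASet, card_filter, ← insertWindow.sum_comp, Fintype.sum_prod_type]
  simp only [card_filter, Nat.cast_sum]

end Insert

/-- The recursion
`d(r,n,k) = (n−k)·d(r,n−1,k−1) + (k+1+(r−1)(n−k))·d(r,n−1,k) + (k+1)(r−1)·d(r,n−1,k+1)`. -/
theorem dG_recursion (r n : ℕ) [NeZero r] (hn : 1 ≤ n) (k : ℤ) :
    (dG r n k : ℤ) =
      ((n : ℤ) - k) * dG r (n - 1) (k - 1) +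
        (k + 1 + ((r : ℤ) - 1) * ((n : ℤ) - k)) * dG r (n - 1) k +
        (k + 1) * ((r : ℤ) - 1) * dG r (n - 1) (k + 1) := by
  obtain ⟨m, rfl⟩ : ∃ m, n = m + 1 := ⟨n - 1, by omega⟩
  rw [dG_succ_eq_sum, add_tsub_cancel_right]
  simp only [card_insertWindow_fiber, sum_add_distrib, sum_ite_card_excASet_eq]
  push_cast
  ring
end

section
/- Let E_{r,n}(t) be defined by E_{r,0}(t) = r/(t−1) and E_{r,n}(t) = −(t+r−1)·d/dt E_{r,n−1}(t) for n ≥ 1. Then for all n ≥ 1, E_{r,n}(t) = (−1)^{n−1} · r · Σ_{j=1}^{n} j! · S(n,j) · (t+r−1)^j / (1−t)^{j+1}, where S(n,j) are the Stirling numbers of the second kind. -/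
/-!
Write `E_{r,n} = (-1)^(n+1) · r · F_n` with `F_n = Σ_j S(n,j) · g_j` (`closedForm a n`),
where `g_j(t) = j! (t+a)^j / (1-t)^(j+1)` (`fracTerm a j`) and `a = r - 1`; this also covers `n = 0`, since
`E_{r,0} = -r · g_0`. The quotient rule gives `(t+a) g_j' = j g_j + g_{j+1}`, so the operator
`-(t+a) d/dt` sends `F_n` to `-Σ_j S(n,j) (j g_j + g_{j+1})`, which is `-F_{n+1}` by the
recurrence `S(n+1,j) = j S(n,j) + S(n,j-1)`.
-/

open Finset

/-- The Stirling numbers of the second kind, via `S(n+1,j) = j·S(n,j) + S(n,j−1)`. -/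
def stirling2 : ℕ → ℕ → ℕ
  | 0, 0 => 1
  | 0, _ + 1 => 0
  | _ + 1, 0 => 0
  | n + 1, j + 1 => (j + 1) * stirling2 n (j + 1) + stirling2 n j

open Nat

theorem stirling2_eq_stirlingSecond : stirling2 = stirlingSecond := by
  funext n j
  induction n generalizing j with
  | zero => cases j <;> rfl
  | succ n ih => cases j <;> simp [stirling2, stirlingSecond_succ_succ, ih]

theorem sum_stirlingSecond_succ_mul {R : Type*} [CommSemiring R] (n : ℕ) (f : ℕ → R) :
    ∑ j ∈ range (n + 2), (stirlingSecond (n + 1) j : R) * f j =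
      ∑ j ∈ range (n + 1), (stirlingSecond n j : R) * (j * f j + f (j + 1)) := by
  have hshift : ∑ j ∈ range (n + 1), (stirlingSecond n j : R) * (j * f j) =
      ∑ j ∈ range (n + 1), (j + 1 : R) * stirlingSecond n (j + 1) * f (j + 1) := by
    calc _ = ∑ j ∈ range (n + 2), (stirlingSecond n j : R) * (j * f j) := by
          rw [sum_range_succ _ (n + 1), stirlingSecond_eq_zero_of_lt n.lt_succ_self]; simp
      _ = _ := by
          rw [sum_range_succ']
          push_cast
          simp only [zero_mul, mul_zero, add_zero]
          exact sum_congr rfl fun j _ => by ring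
  rw [sum_range_succ', stirlingSecond_succ_zero, Nat.cast_zero, zero_mul, add_zero]
  simp only [mul_add, sum_add_distrib]
  rw [hshift, ← sum_add_distrib]
  refine sum_congr rfl fun j _ => ?_
  push_cast [stirlingSecond_succ_succ]
  ring

noncomputable def fracTerm (a : ℝ) (j : ℕ) (t : ℝ) : ℝ :=
  j ! * (t + a) ^ j / (1 - t) ^ (j + 1)

theorem hasDerivAt_fracTerm (a : ℝ) (j : ℕ) {t : ℝ} (ht : t ≠ 1) :
    HasDerivAt (fracTerm a j)
      (j ! * (j * (t + a) ^ (j - 1) / (1 - t) ^ (j + 1) + (j + 1) * (t + a) ^ j / (1 - t) ^ (j + 2)))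
      t := by
  have hne : 1 - t ≠ 0 := sub_ne_zero.mpr ht.symm
  have hnum := ((hasDerivAt_id' t).add_const a |>.fun_pow j).const_mul (j ! : ℝ)
  have hden := (hasDerivAt_id' t).const_sub 1 |>.fun_pow (j + 1)
  refine (hnum.fun_div hden (pow_ne_zero _ hne)).congr_deriv ?_
  rw [Nat.add_sub_cancel]
  push_cast
  field_simp
  ring

theorem add_mul_deriv_fracTerm (a : ℝ) (j : ℕ) {t : ℝ} (ht : t ≠ 1) :
    (t + a) * deriv (fracTerm a j) t = j * fracTerm a j t + fracTerm a (j + 1) t := by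
  have hne : 1 - t ≠ 0 := sub_ne_zero.mpr ht.symm
  rw [(hasDerivAt_fracTerm a j ht).deriv, fracTerm, fracTerm, factorial_succ]
  rcases j with _ | j
  · simp only [CharP.cast_eq_zero, zero_mul, zero_div, zero_add]
    field_simp
    simp
  · simp only [Nat.add_sub_cancel]
    push_cast
    field_simp
    ring

noncomputable def closedForm (a : ℝ) (n : ℕ) (t : ℝ) : ℝ :=
  ∑ j ∈ range (n + 1), (stirlingSecond n j : ℝ) * fracTerm a j t

theorem add_mul_deriv_closedForm (a : ℝ) (n : ℕ) {t : ℝ} (ht : t ≠ 1) :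
    (t + a) * deriv (closedForm a n) t = closedForm a (n + 1) t := by
  have hderiv : HasDerivAt (closedForm a n) _ t := HasDerivAt.fun_sum fun j _ =>
    (hasDerivAt_fracTerm a j ht).const_mul (stirlingSecond n j : ℝ)
  rw [hderiv.deriv, closedForm, sum_stirlingSecond_succ_mul, mul_sum]
  refine sum_congr rfl fun j _ => ?_
  rw [← add_mul_deriv_fracTerm a j ht, (hasDerivAt_fracTerm a j ht).deriv]
  ring

theorem eq_neg_one_pow_mul_closedForm (c a : ℝ) (E : ℕ → ℝ → ℝ)
    (hE0 : ∀ t, E 0 t = c / (t - 1))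
    (hE : ∀ n t, E (n + 1) t = -(t + a) * deriv (E n) t) (n : ℕ) {t : ℝ} (ht : t ≠ 1) :
    E n t = (-1) ^ (n + 1) * c * closedForm a n t := by
  induction n generalizing t with
  | zero =>
    have hne : 1 - t ≠ 0 := sub_ne_zero.mpr ht.symm
    rw [hE0, closedForm, sum_range_one, fracTerm, stirlingSecond_zero, ← neg_sub 1 t]
    field_simp
    norm_num
  | succ n ih =>
    have hev : E n =ᶠ[nhds t] fun s => (-1) ^ (n + 1) * c * closedForm a n s :=
      (eventually_ne_nhds ht).mono fun s hs => ih hs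
    have hdiff : DifferentiableAt ℝ (closedForm a n) t := DifferentiableAt.fun_sum fun j _ =>
      ((hasDerivAt_fracTerm a j ht).differentiableAt.const_mul _)
    rw [hE, hev.deriv_eq, deriv_const_mul _ hdiff, ← add_mul_deriv_closedForm a n ht]
    ring

theorem closedForm_succ_eq_sum_Icc (a : ℝ) (n : ℕ) (t : ℝ) :
    closedForm a (n + 1) t =
      ∑ j ∈ Icc 1 (n + 1), (j ! : ℝ) * stirlingSecond (n + 1) j * (t + a) ^ j / (1 - t) ^ (j + 1) := by
  rw [closedForm, range_eq_Ico, sum_eq_sum_Ico_succ_bot (n + 1).succ_pos, stirlingSecond_succ_zero,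
    Nat.cast_zero, zero_mul, zero_add, Nat.succ_eq_add_one, Ico_add_one_right_eq_Icc]
  exact sum_congr rfl fun j _ => by rw [fracTerm]; ring

theorem E_closed_form_general (r : ℕ) (E : ℕ → ℝ → ℝ)
    (hE0 : ∀ t : ℝ, E 0 t = r / (t - 1))
    (hErec : ∀ n : ℕ, 1 ≤ n → ∀ t : ℝ, E n t = -(t + r - 1) * deriv (E (n - 1)) t)
    (n : ℕ) (hn : 1 ≤ n) (t : ℝ) (ht : t ≠ 1) :
    E n t =
      (-1 : ℝ) ^ (n - 1) * r *
        ∑ j ∈ Finset.Icc 1 n,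
          (j.factorial : ℝ) * (stirling2 n j : ℝ) * (t + r - 1) ^ j / (1 - t) ^ (j + 1) := by
  have hE : ∀ n t, E (n + 1) t = -(t + (r - 1)) * deriv (E n) t := fun n t => by
    rw [hErec (n + 1) n.succ_pos t, Nat.add_sub_cancel, add_sub_assoc]
  obtain ⟨m, rfl⟩ := Nat.exists_eq_add_of_le' hn
  rw [eq_neg_one_pow_mul_closedForm r (r - 1) E hE0 hE (m + 1) ht, closedForm_succ_eq_sum_Icc,
    stirling2_eq_stirlingSecond, Nat.add_sub_cancel, ← add_sub_assoc]
  ring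

/-- Let `E_{r,n}` be defined by `E_{r,0}(t) = r/(t−1)` and
`E_{r,n}(t) = −(t+r−1)·(d/dt) E_{r,n−1}(t)` for `n ≥ 1`.  Then for all `n ≥ 1`,
`E_{r,n}(t) = (−1)^{n−1}·r·Σ_{j=1}^{n} j!·S(n,j)·(t+r−1)^j/(1−t)^{j+1}`. -/
theorem E_closed_form (r : ℕ) (hr : 1 ≤ r) (E : ℕ → ℝ → ℝ)
    (hE0 : ∀ t : ℝ, E 0 t = r / (t - 1))
    (hErec : ∀ n : ℕ, 1 ≤ n → ∀ t : ℝ, E n t = -(t + r - 1) * deriv (E (n - 1)) t)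
    (n : ℕ) (hn : 1 ≤ n) (t : ℝ) (ht : t ≠ 1) :
    E n t =
      (-1 : ℝ) ^ (n - 1) * r *
        ∑ j ∈ Finset.Icc 1 n,
          (j.factorial : ℝ) * (stirling2 n j : ℝ) * (t + r - 1) ^ j / (1 - t) ^ (j + 1) :=
  E_closed_form_general r E hE0 hErec n hn t ht
end
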